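/- Let A = {u₁, …, u_m} be a set of m distinct unit vectors in ℝⁿ containing no simplicial family of size 3 or greater, and suppose c₁u₁ + ⋯ + c_m u_m = 0 for some real numbers c₁, …, c_m > 0. Then m = 2s for some integer s ≤ n, and there exist linearly independent unit vectors v₁, …, v_s such that A = {±v₁, …, ±v_s}. -/

import Mathlib

open scoped Pointwise RealInnerProductSpace
noncomputable section

/-- Abbreviation for n-dimensional Euclidean space. -/
abbrev Euc (n : ℕ) := EuclideanSpace ℝ (Fin n)

/-- The translate K + v of a set K by a vector v. -/
def transl {n : ℕ} (K : Set (Euc n)) (v : Euc n) : Set (Euc n) := (fun x => x + v) '' K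

/-- Orthogonal projection of a set onto a subspace ξ, viewed inside the ambient space. -/
def projSet {n : ℕ} (ξ : Submodule ℝ (Euc n)) (K : Set (Euc n)) : Set (Euc n) :=
  (fun x => (Submodule.orthogonalProjection ξ x : Euc n)) '' K

/-- A simplicial family of size m+1: distinct unit vectors spanning an m-dimensional
subspace, some positive combination of which vanishes (the outer unit normals of an
m-dimensional simplex). -/
def SimplicialFamily {n : ℕ} (m : ℕ) (u : Fin (m + 1) → Euc n) : Prop :=
  Function.Injective u ∧ (∀ i, ‖u i‖ = 1) ∧
    Module.finrank ℝ (Submodule.span ℝ (Set.range u)) = m ∧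
    ∃ c : Fin (m + 1) → ℝ, (∀ i, 0 < c i) ∧ ∑ i, c i • u i = 0

/-- L is d-reliable: whenever every projection of L onto a d-dimensional subspace contains
a translate of the corresponding projection of a compact convex set K, L contains a
translate of K. -/
def DReliable {n : ℕ} (d : ℕ) (L : Set (Euc n)) : Prop :=
  ∀ K : Set (Euc n), IsCompact K → Convex ℝ K → K.Nonempty →
    (∀ ξ : Submodule ℝ (Euc n), Module.finrank ℝ ξ = d →
      ∃ w, transl (projSet ξ K) w ⊆ projSet ξ L) →
    ∃ v, transl K v ⊆ L

/-- x is a regular boundary point of L: exactly one outer unit normal at x. -/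
def IsRegularPoint {n : ℕ} (L : Set (Euc n)) (x : Euc n) : Prop :=
  x ∈ frontier L ∧ ∃! u : Euc n, ‖u‖ = 1 ∧ ∀ y ∈ L, ⟪y - x, u⟫ ≤ 0

/-- u is the (unique) outer unit normal to L at the regular boundary point x. -/
def IsNormalAtRegularPoint {n : ℕ} (L : Set (Euc n)) (x u : Euc n) : Prop :=
  x ∈ frontier L ∧ ‖u‖ = 1 ∧ (∀ y ∈ L, ⟪y - x, u⟫ ≤ 0) ∧
    ∀ w : Euc n, ‖w‖ = 1 → (∀ y ∈ L, ⟪y - x, w⟫ ≤ 0) → w = u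

/-- The support set of P in direction u. -/
def supportSet {n : ℕ} (P : Set (Euc n)) (u : Euc n) : Set (Euc n) :=
  {x ∈ P | ∀ y ∈ P, ⟪y, u⟫ ≤ ⟪x, u⟫}

/-- u is an outer unit facet normal of P: the support set of P in direction u is a face of
codimension 1 in the affine hull of P. -/
def IsFacetNormal {n : ℕ} (P : Set (Euc n)) (u : Euc n) : Prop :=
  ‖u‖ = 1 ∧ Module.finrank ℝ (vectorSpan ℝ (supportSet P u)) + 1
      = Module.finrank ℝ (vectorSpan ℝ P)

/-- S is a k-dimensional simplex: the convex hull of k+1 affinely independent points. -/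
def IsSimplexOfDim {n : ℕ} (k : ℕ) (S : Set (Euc n)) : Prop :=
  ∃ p : Fin (k + 1) → Euc n, AffineIndependent ℝ p ∧ S = convexHull ℝ (Set.range p)

/-- C is d-decomposable: a direct Minkowski sum of at least two nonempty compact convex
sets lying in complementary subspaces of dimension at most d. -/
def DDecomposable {n : ℕ} (d : ℕ) (C : Set (Euc n)) : Prop :=
  ∃ (m : ℕ) (ξ : Fin m → Submodule ℝ (Euc n)) (Cs : Fin m → Set (Euc n)),
    2 ≤ m ∧ iSupIndep ξ ∧ (⨆ i, ξ i) = ⊤ ∧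
    (∀ i, Module.finrank ℝ (ξ i) ≤ d) ∧
    (∀ i, (Cs i).Nonempty ∧ IsCompact (Cs i) ∧ Convex ℝ (Cs i) ∧ Cs i ⊆ (ξ i : Set (Euc n))) ∧
    C = ∑ i, Cs i

/-- C is a d-decomposable orthogonal simplex product: a direct Minkowski sum of simplices of
dimension at most d lying in mutually orthogonal complementary subspaces of dimension at
most d. -/
def OrthSimplexProduct {n : ℕ} (d : ℕ) (C : Set (Euc n)) : Prop :=
  ∃ (m : ℕ) (ξ : Fin m → Submodule ℝ (Euc n)) (Cs : Fin m → Set (Euc n)),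
    2 ≤ m ∧ iSupIndep ξ ∧ (⨆ i, ξ i) = ⊤ ∧
    (∀ i, Module.finrank ℝ (ξ i) ≤ d) ∧
    (∀ i j, i ≠ j → ∀ x ∈ ξ i, ∀ y ∈ ξ j, ⟪x, y⟫ = 0) ∧
    (∀ i, Cs i ⊆ (ξ i : Set (Euc n)) ∧ ∃ k ≤ d, IsSimplexOfDim k (Cs i)) ∧
    C = ∑ i, Cs i

/-!
Conic Carathéodory writes `-u i = ∑_{j ≠ i} (c j / c i) • u j` as a positive combination of
linearly independent members `u j`. Were there two or more of them, together with `u i` they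
would form a simplicial family of size at least 3; so there is exactly one, and comparing norms
it is `-u i`. Hence the family is symmetric under negation. A half `V` of it (one vector from
each pair `±x`) is linearly independent: flipping signs in a linear relation on `V` gives a
positive relation on a subfamily, which must again be symmetric, impossible for vectors taken
from `±V` with at most one sign each.
-/

section Caratheodory

variable {𝕜 E ι : Type*} [Field 𝕜] [LinearOrder 𝕜] [IsStrictOrderedRing 𝕜]
  [AddCommGroup E] [Module 𝕜 E] {v : ι → E} {S : Finset ι} {c : ι → 𝕜}

theorem exists_nonneg_sum_smul_eq_of_not_linearIndepOn
    (hc : ∀ i ∈ S, 0 ≤ c i) (hS : ¬LinearIndepOn 𝕜 v S) :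
    ∃ j ∈ S, ∃ c' : ι → 𝕜, (∀ i ∈ S, 0 ≤ c' i) ∧ c' j = 0 ∧
      ∑ i ∈ S, c' i • v i = ∑ i ∈ S, c i • v i := by
  obtain ⟨g, hg, hg_pos⟩ : ∃ g : ι → 𝕜, ∑ i ∈ S, g i • v i = 0 ∧ ∃ i ∈ S, 0 < g i := by
    obtain ⟨g, hg, i, hi, hgi⟩ := not_linearIndepOn_finset_iff.1 hS
    rcases hgi.lt_or_gt with hneg | hpos
    · exact ⟨-g, by simp [neg_smul, hg], i, hi, by simpa⟩
    · exact ⟨g, hg, i, hi, hpos⟩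
  -- move along `-g` until the first coefficient of `c` reaches zero
  obtain ⟨j, hj, hj_min⟩ := Finset.exists_min_image (S.filter (0 < g ·)) (fun i => c i / g i)
    (by simpa [Finset.Nonempty] using hg_pos)
  rw [Finset.mem_filter] at hj
  refine ⟨j, hj.1, fun i => c i - c j / g j * g i, fun i hi => ?_,
    sub_eq_zero.2 (div_mul_cancel₀ _ hj.2.ne').symm, ?_⟩
  · rcases lt_or_ge 0 (g i) with hgi | hgi
    · have := hj_min i (Finset.mem_filter.2 ⟨hi, hgi⟩)
      rw [le_div_iff₀ hgi] at this
      linarith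
    · have := div_nonneg (hc j hj.1) hj.2.le
      nlinarith [hc i hi]
  · simp only [sub_smul, mul_smul, Finset.sum_sub_distrib, ← Finset.smul_sum, hg, smul_zero,
      sub_zero]

/-- Carathéodory's theorem for cones. -/
theorem exists_linearIndepOn_pos_sum_smul_eq (hc : ∀ i ∈ S, 0 ≤ c i) :
    ∃ T ⊆ S, LinearIndepOn 𝕜 v T ∧ ∃ d : ι → 𝕜, (∀ i ∈ T, 0 < d i) ∧
      ∑ i ∈ T, d i • v i = ∑ i ∈ S, c i • v i := by
  classical
  induction S using Finset.strongInduction generalizing c with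
  | _ S ih =>
  by_cases hS : LinearIndepOn 𝕜 v S ∧ ∀ i ∈ S, 0 < c i
  · exact ⟨S, subset_rfl, hS.1, c, hS.2, rfl⟩
  obtain ⟨j, hj, c', hc', hc'j, hsum⟩ : ∃ j ∈ S, ∃ c' : ι → 𝕜, (∀ i ∈ S, 0 ≤ c' i) ∧
      c' j = 0 ∧ ∑ i ∈ S, c' i • v i = ∑ i ∈ S, c i • v i := by
    by_cases hli : LinearIndepOn 𝕜 v S
    · obtain ⟨j, hj, hcj⟩ : ∃ j ∈ S, c j ≤ 0 := by simpa [hli] using hS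
      exact ⟨j, hj, c, hc, le_antisymm hcj (hc j hj), rfl⟩
    · exact exists_nonneg_sum_smul_eq_of_not_linearIndepOn hc hli
  obtain ⟨T, hT, hTli, d, hd, hdsum⟩ := ih (S.erase j) (Finset.erase_ssubset hj)
    (fun i hi => hc' i (Finset.mem_of_mem_erase hi))
  refine ⟨T, hT.trans (Finset.erase_subset j S), hTli, d, hd, ?_⟩
  rw [hdsum, Finset.sum_erase _ (by rw [hc'j, zero_smul]), hsum]

end Caratheodory

theorem LinearIndepOn.exists_linearIndependent_fin {K E : Type*} [Semiring K] [AddCommMonoid E]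
    [Module K E] {V : Finset E} (hV : LinearIndepOn K id (V : Set E)) :
    ∃ v : Fin V.card → E, LinearIndependent K v ∧ Set.range v = V := by
  let e := V.equivFin.symm
  refine ⟨fun k => e k, hV.linearIndependent.comp e e.injective, ?_⟩
  rw [← Function.comp_def, e.surjective.range_comp, Subtype.range_coe]

theorem Finset.exists_disjoint_neg_union_eq {K M : Type*} [Field K] [LinearOrder K]
    [IsStrictOrderedRing K] [AddCommGroup M] [Module K M] [DecidableEq M] {S : Finset M}
    (hS : ∀ x ∈ S, -x ∈ S) (h0 : (0 : M) ∉ S) :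
    ∃ V : Finset M, Disjoint V (-V) ∧ V ∪ -V = S := by
  -- a linear functional vanishing nowhere on `S` picks one vector out of each pair `±x`
  obtain ⟨f, hf⟩ := Module.exists_dual_forall_apply_ne_zero (K := K) (fun x : S => (x : M))
    fun x hx => h0 (hx ▸ x.2)
  refine ⟨S.filter (0 < f ·), Finset.disjoint_left.2 fun x hx hx' => ?_, ?_⟩
  · rw [Finset.mem_neg', Finset.mem_filter, map_neg] at hx'
    linarith [(Finset.mem_filter.1 hx).2]
  · ext x
    simp only [Finset.mem_union, Finset.mem_neg', Finset.mem_filter, map_neg, neg_pos]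
    refine ⟨by rintro (h | h); exacts [h.1, neg_neg x ▸ hS _ h.1], fun hx => ?_⟩
    rcases (hf ⟨x, hx⟩).lt_or_gt with hlt | hgt
    exacts [Or.inr ⟨hS x hx, hlt⟩, Or.inl ⟨hx, hgt⟩]

theorem simplicialFamily_cons {n k : ℕ} {x : Euc n} {v : Fin k → Euc n}
    (hv : LinearIndependent ℝ v) (hx : x ∉ Set.range v) (hx1 : ‖x‖ = 1) (hv1 : ∀ i, ‖v i‖ = 1)
    {d : Fin k → ℝ} (hd : ∀ i, 0 < d i) (hsum : ∑ i, d i • v i = -x) :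
    SimplicialFamily k (Fin.cons x v) := by
  have hx_span : x ∈ Submodule.span ℝ (Set.range v) := by
    rw [← neg_neg x, ← hsum]
    exact Submodule.neg_mem _ (Submodule.sum_mem _ fun i _ =>
      Submodule.smul_mem _ _ (Submodule.subset_span (Set.mem_range_self i)))
  refine ⟨Fin.cons_injective_iff.2 ⟨hx, hv.injective⟩, Fin.cases hx1 hv1, ?_,
    Fin.cons 1 d, Fin.cases one_pos hd, ?_⟩
  · rw [Fin.range_cons, Submodule.span_insert_eq_span hx_span, finrank_span_eq_card hv,
      Fintype.card_fin]
  · simp [Fin.sum_univ_succ, hsum]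

section NoSimplicialFamily

variable {n : ℕ} {A : Set (Euc n)}

theorem exists_eq_neg_of_sum_smul_eq_zero (hA1 : ∀ a ∈ A, ‖a‖ = 1)
    (hA : ∀ (k : ℕ) (v : Fin (k + 1) → Euc n), 2 ≤ k → (∀ i, v i ∈ A) → ¬SimplicialFamily k v)
    {ι : Type*} {w : ι → Euc n} {S : Finset ι}
    (hwA : ∀ i ∈ S, w i ∈ A) (hw : Set.InjOn w S) {b : ι → ℝ} (hb : ∀ i ∈ S, 0 < b i)
    (hsum : ∑ i ∈ S, b i • w i = 0) {i₀ : ι} (hi₀ : i₀ ∈ S) : ∃ j ∈ S, w j = -w i₀ := by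
  classical
  have hrepr : ∑ i ∈ S.erase i₀, (b i / b i₀) • w i = -w i₀ := by
    rw [← Finset.sum_erase_add _ _ hi₀] at hsum
    simp_rw [div_eq_inv_mul, mul_smul, ← Finset.smul_sum, eq_neg_of_add_eq_zero_left hsum,
      smul_neg, inv_smul_smul₀ (hb i₀ hi₀).ne']
  obtain ⟨T, hTS, hTli, d, hd, hdsum⟩ := exists_linearIndepOn_pos_sum_smul_eq (v := w)
    fun i hi => div_nonneg (hb i (Finset.mem_of_mem_erase hi)).le (hb i₀ hi₀).le
  rw [hrepr] at hdsum
  have hTS' : T ⊆ S := hTS.trans (Finset.erase_subset i₀ S)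
  have hi₀T : i₀ ∉ T := fun h => Finset.notMem_erase i₀ S (hTS h)
  have hwi₀ : ‖w i₀‖ = 1 := hA1 _ (hwA i₀ hi₀)
  obtain hT | hT | hT : T.card = 0 ∨ T.card = 1 ∨ 2 ≤ T.card := by omega
  · rw [Finset.card_eq_zero.1 hT, Finset.sum_empty, eq_comm, neg_eq_zero] at hdsum
    simp [hdsum] at hwi₀
  · obtain ⟨j, rfl⟩ := Finset.card_eq_one.1 hT
    have hj := Finset.mem_singleton_self j
    rw [Finset.sum_singleton] at hdsum
    have hdj : d j = 1 := by
      simpa [norm_smul, hA1 _ (hwA j (hTS' hj)), hwi₀, abs_of_pos (hd j hj)] using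
        congrArg norm hdsum
    exact ⟨j, hTS' hj, by rwa [hdj, one_smul] at hdsum⟩
  · exfalso
    let e := T.equivFin.symm
    refine hA T.card (Fin.cons (w i₀) fun k => w (e k)) hT
      (Fin.cases (hwA i₀ hi₀) fun k => hwA _ (hTS' (e k).2))
      (simplicialFamily_cons (hTli.linearIndependent.comp e e.injective) ?_ hwi₀
        (fun k => hA1 _ (hwA _ (hTS' (e k).2))) (fun k => hd _ (e k).2) ?_)
    · rintro ⟨k, hk⟩
      exact hi₀T (hw (hTS' (e k).2) hi₀ hk ▸ (e k).2)
    · rw [← hdsum, ← Finset.sum_coe_sort T]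
      exact e.sum_comp fun i : T => d i • w i

theorem linearIndepOn_of_disjoint_neg (hA1 : ∀ a ∈ A, ‖a‖ = 1)
    (hA : ∀ (k : ℕ) (v : Fin (k + 1) → Euc n), 2 ≤ k → (∀ i, v i ∈ A) → ¬SimplicialFamily k v)
    {V : Finset (Euc n)} (hVA : ↑(V ∪ -V) ⊆ A)
    (hV : Disjoint V (-V)) : LinearIndepOn ℝ id (V : Set (Euc n)) := by
  rw [linearIndepOn_finset_iff]
  by_contra! ⟨g, hg, x₀, hx₀, hgx₀⟩
  let σ x := if 0 < g x then x else -x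
  have hσ x : σ x = x ∨ σ x = -x := by unfold σ; split_ifs <;> simp
  have hσ_eq {x y} (hx : x ∈ V) (hy : y ∈ V) (h : σ x = σ y ∨ σ x = -σ y) : x = y := by
    have hneg : x ≠ -y := fun hxy =>
      Finset.disjoint_left.1 hV hx (Finset.mem_neg'.2 (by rwa [hxy, neg_neg]))
    refine (?_ : x = y ∨ x = -y).resolve_right hneg
    rcases hσ x with h1 | h1 <;> rcases hσ y with h2 | h2 <;>
      simp only [h1, h2, neg_neg, neg_eq_iff_eq_neg] at h <;> tauto
  have hσA {x} (hx : x ∈ V) : σ x ∈ A := by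
    rcases hσ x with h | h <;> rw [h] <;> apply hVA <;> simp [hx]
  have hσ_sum : ∑ x ∈ V with g x ≠ 0, |g x| • σ x = 0 := by
    refine (Finset.sum_congr rfl fun x hx => ?_).trans
      ((Finset.sum_filter_of_ne fun x _ hx => left_ne_zero_of_smul hx).trans hg)
    have hgx := (Finset.mem_filter.1 hx).2
    unfold σ
    split_ifs with hpos
    · rw [abs_of_pos hpos, id]
    · rw [abs_of_neg ((not_lt.1 hpos).lt_of_ne hgx), smul_neg, neg_smul, neg_neg, id]
  obtain ⟨y, hy, hσy⟩ := exists_eq_neg_of_sum_smul_eq_zero hA1 hA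
    (fun x hx => hσA (Finset.mem_filter.1 hx).1)
    (fun x hx y hy h => hσ_eq (Finset.mem_filter.1 hx).1 (Finset.mem_filter.1 hy).1 (Or.inl h))
    (fun x hx => abs_pos.2 (Finset.mem_filter.1 hx).2) hσ_sum
    (Finset.mem_filter.2 ⟨hx₀, hgx₀⟩)
  obtain rfl := hσ_eq (Finset.mem_filter.1 hy).1 hx₀ (Or.inr hσy)
  obtain rfl : y = 0 := by
    rcases hσ y with h | h <;> rw [h] at hσy
    · linear_combination (norm := module) (2⁻¹ : ℝ) • hσy
    · linear_combination (norm := module) -(2⁻¹ : ℝ) • hσy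
  exact Finset.disjoint_left.1 hV hx₀ (Finset.mem_neg'.2 (by rwa [neg_zero]))

end NoSimplicialFamily

/-- If a family of m distinct unit vectors contains no simplicial family of size 3 or
greater, while some positive combination of its members vanishes, then m = 2s with s ≤ n
and the family consists of s antipodal pairs ±v₁, …, ±v_s of linearly independent
vectors. -/
theorem no_simplicial_three_antipodal {n m : ℕ} (u : Fin m → Euc n)
    (hinj : Function.Injective u) (hunit : ∀ i, ‖u i‖ = 1)
    (hnosimp : ∀ (k : ℕ) (v : Fin (k + 1) → Euc n), 2 ≤ k →
      (∀ i, v i ∈ Set.range u) → ¬ SimplicialFamily k v)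
    (c : Fin m → ℝ) (hc : ∀ i, 0 < c i) (hsum : ∑ i, c i • u i = 0) :
    ∃ s : ℕ, s ≤ n ∧ m = 2 * s ∧
      ∃ v : Fin s → Euc n, LinearIndependent ℝ v ∧ (∀ i, ‖v i‖ = 1) ∧
        Set.range u = Set.range v ∪ Set.range (fun i => -(v i)) := by
  have hA1 : ∀ a ∈ Set.range u, ‖a‖ = 1 := Set.forall_mem_range.2 hunit
  set A := Finset.univ.image u with hA_def
  have hA : (A : Set (Euc n)) = Set.range u := by simp [A]
  have hA_neg : ∀ x ∈ A, -x ∈ A := Finset.forall_mem_image.2 fun i _ => by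
    obtain ⟨j, -, hj⟩ := exists_eq_neg_of_sum_smul_eq_zero hA1 hnosimp
      (fun i _ => Set.mem_range_self i) hinj.injOn (fun i _ => hc i) hsum (Finset.mem_univ i)
    exact Finset.mem_image.2 ⟨j, Finset.mem_univ j, hj⟩
  have hA0 : (0 : Euc n) ∉ A := fun h => by simpa using hA1 0 (hA ▸ h)
  obtain ⟨V, hV, hVA⟩ := Finset.exists_disjoint_neg_union_eq (K := ℝ) hA_neg hA0
  obtain ⟨v, hv, hv_range⟩ :=
    (linearIndepOn_of_disjoint_neg hA1 hnosimp (by rw [hVA, hA]) hV).exists_linearIndependent_fin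
  have hu_range : Set.range u = Set.range v ∪ Set.range (fun i => -(v i)) := by
    rw [← hA, ← hVA, Finset.coe_union, Finset.coe_neg, ← hv_range, ← Set.image_neg_eq_neg,
      ← Set.range_comp]
    rfl
  refine ⟨V.card, by simpa using hv.fintype_card_le_finrank, ?_, v, hv,
    fun k => hA1 _ (hu_range ▸ Or.inl (Set.mem_range_self k)), hu_range⟩
  rw [← Finset.card_fin m, ← Finset.card_image_of_injective _ hinj, ← hA_def, ← hVA,
    Finset.card_union_of_disjoint hV, Finset.card_neg, two_mul]
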